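/- arXiv:1411.6692 — 3 statements merged into one kernel-verified Lean document; each statement's English description precedes it below -/
import Mathlib

section
/- Let L be a split δ Jordan-Lie algebra with symmetric root system Λ. The connection relation ~ on Λ, defined by α ~ β if and only if there exists a connection from α to β, is an equivalence relation. -/
/-- A δ Jordan-Lie algebra: a vector space with a bilinear bracket satisfying
`[x,y] = -δ[y,x]` and `[x,[y,z]] = δ[[x,y],z] + δ[y,[x,z]]` with `δ = ±1`. -/
structure DeltaJordanLie (K L : Type*) [Field K] [AddCommGroup L] [Module K L] where
  br : L →ₗ[K] L →ₗ[K] L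
  delta : K
  delta_pm : delta = 1 ∨ delta = -1
  anti : ∀ x y : L, br x y = -(delta • br y x)
  jacobi : ∀ x y z : L, br x (br y z) = delta • br (br x y) z + delta • br y (br x z)

variable {K L : Type*} [Field K] [AddCommGroup L] [Module K L]

/-- The root space `L_α = {v ∈ L : [h,v] = α(h)v for all h ∈ H}`. -/
def DeltaJordanLie.rootSpace (J : DeltaJordanLie K L) (H : Submodule K L)
    (α : Module.Dual K H) : Submodule K L where
  carrier := {v : L | ∀ h : H, J.br (h : L) v = α h • v}
  zero_mem' := by intro h; simp
  add_mem' := by intro a b ha hb h; simp [ha h, hb h, smul_add]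
  smul_mem' := by intro c a ha h; rw [map_smul, ha h, smul_comm]

/-- The root system `Λ = {α ∈ H* \ {0} : L_α ≠ 0}`. -/
def DeltaJordanLie.roots (J : DeltaJordanLie K L) (H : Submodule K L) :
    Set (Module.Dual K H) :=
  {α | α ≠ 0 ∧ J.rootSpace H α ≠ ⊥}

/-- `H` is a splitting Cartan subalgebra: a maximal abelian subalgebra such that
`L` decomposes as the direct sum of the simultaneous eigenspaces `L_α`, with `L_0 = H`. -/
structure DeltaJordanLie.IsSplitting (J : DeltaJordanLie K L) (H : Submodule K L) : Prop where
  abelian : ∀ x ∈ H, ∀ y ∈ H, J.br x y = 0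
  maximal : ∀ H' : Submodule K L, H ≤ H' →
      (∀ x ∈ H', ∀ y ∈ H', J.br x y = 0) → H' = H
  zero_rootSpace : J.rootSpace H 0 = H
  indep : iSupIndep (fun α : Module.Dual K H => J.rootSpace H α)
  decomp : (⨆ α : Module.Dual K H, J.rootSpace H α) = ⊤

/-- The root system is symmetric. -/
def DeltaJordanLie.SymmetricRoots (J : DeltaJordanLie K L) (H : Submodule K L) : Prop :=
  ∀ α ∈ J.roots H, -α ∈ J.roots H

/-- The δ-twisted partial sums of a sequence of roots:
`s₀ = f 0`, `s_{k+1} = δ • (s_k + f (k+1))`, so that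
`s_k = δ^k f 0 + δ^k f 1 + δ^{k-1} f 2 + ⋯ + δ f k`. -/
def connSum {H : Submodule K L} (d : K) (f : ℕ → Module.Dual K H) : ℕ → Module.Dual K H
  | 0 => f 0
  | k + 1 => d • (connSum d f k + f (k + 1))

/-- `f 0, …, f n` is a connection from `α` to `β`: all terms are roots, `f 0 = α`,
all proper δ-twisted partial sums are roots, and the final sum is `±β`. -/
def IsConnection (J : DeltaJordanLie K L) (H : Submodule K L)
    (α β : Module.Dual K H) (n : ℕ) (f : ℕ → Module.Dual K H) : Prop :=
  (∀ i ≤ n, f i ∈ J.roots H) ∧ f 0 = α ∧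
  (∀ k < n, connSum J.delta f k ∈ J.roots H) ∧
  (connSum J.delta f n = β ∨ connSum J.delta f n = -β)

/-- `α` and `β` are connected. -/
def Connected (J : DeltaJordanLie K L) (H : Submodule K L)
    (α β : Module.Dual K H) : Prop :=
  ∃ n f, IsConnection J H α β n f

/-- `Λ_α`: the set of nonzero roots connected to `α`. -/
def connectedRoots (J : DeltaJordanLie K L) (H : Submodule K L)
    (α : Module.Dual K H) : Set (Module.Dual K H) :=
  {β ∈ J.roots H | Connected J H α β}

/-- An ideal of a δ Jordan-Lie algebra: a submodule with `[I,L] ⊆ I` and `[L,I] ⊆ I`. -/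
def IsIdeal (J : DeltaJordanLie K L) (I : Submodule K L) : Prop :=
  ∀ x ∈ I, ∀ y : L, J.br x y ∈ I ∧ J.br y x ∈ I

/-- `H_S = span{[L_β, L_{-β}] : β ∈ S}`. -/
def rootSpan (J : DeltaJordanLie K L) (H : Submodule K L)
    (S : Set (Module.Dual K H)) : Submodule K L :=
  Submodule.span K {z : L | ∃ β ∈ S, ∃ x ∈ J.rootSpace H β, ∃ y ∈ J.rootSpace H (-β),
    z = J.br x y}

/-- `L_S = H_S ⊕ V_S`, the subalgebra associated to a set of roots `S`. -/
def decIdeal (J : DeltaJordanLie K L) (H : Submodule K L)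
    (S : Set (Module.Dual K H)) : Submodule K L :=
  rootSpan J H S ⊔ ⨆ β ∈ S, J.rootSpace H β

/-! Since `δ² = 1` and `Λ = -Λ`, multiplying roots by signs `ε` with `ε² = 1` keeps them in `Λ`.
A connection from `β` to `γ`, rescaled by the sign `ε` with `β = ε • (final sum)`, can be appended
to one from `α` to `β`: this gives transitivity. Reading a connection backwards, with the terms
multiplied by `-δ` and the final sum put in front, retraces its partial sums in reverse order:
this gives symmetry. -/

lemma eq_or_eq_neg_iff_exists_smul (R : Type*) {M : Type*} [Ring R] [NoZeroDivisors R]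
    [AddCommGroup M] [Module R M] {x y : M} :
    (x = y ∨ x = -y) ↔ ∃ ε : R, ε * ε = 1 ∧ x = ε • y := by
  constructor
  · rintro (rfl | rfl)
    · exact ⟨1, one_mul 1, (one_smul R x).symm⟩
    · exact ⟨-1, by simp, (neg_one_smul R y).symm⟩
  · rintro ⟨ε, hε, rfl⟩
    rcases mul_self_eq_one_iff.mp hε with rfl | rfl <;> simp

lemma DeltaJordanLie.delta_mul_self (J : DeltaJordanLie K L) : J.delta * J.delta = 1 :=
  mul_self_eq_one_iff.mpr J.delta_pm

lemma DeltaJordanLie.SymmetricRoots.smul_mem {J : DeltaJordanLie K L} {H : Submodule K L}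
    (hsym : J.SymmetricRoots H) {ε : K} (hε : ε * ε = 1) {β : Module.Dual K H}
    (hβ : β ∈ J.roots H) : ε • β ∈ J.roots H := by
  rcases mul_self_eq_one_iff.mp hε with rfl | rfl
  · rwa [one_smul]
  · convert hsym β hβ using 1
    module

section connSum

variable {H : Submodule K L} (d : K) (f g : ℕ → Module.Dual K H)

lemma connSum_congr {k : ℕ} (h : ∀ i ≤ k, f i = g i) : connSum d f k = connSum d g k := by
  induction k with
  | zero => exact h 0 le_rfl
  | succ k ih =>
    rw [connSum, connSum, ih fun i hi => h i (hi.trans k.le_succ), h (k + 1) le_rfl]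

lemma connSum_smul (c : K) (k : ℕ) : connSum d (fun i => c • f i) k = c • connSum d f k := by
  induction k with
  | zero => rfl
  | succ k ih => rw [connSum, connSum, ih, ← smul_add, smul_comm]

lemma connSum_append {n : ℕ} (h : connSum d f n = g 0) (k : ℕ) :
    connSum d (fun i => if i ≤ n then f i else g (i - n)) (n + k) = connSum d g k := by
  induction k with
  | zero => rw [Nat.add_zero, connSum_congr d _ f fun i hi => if_pos hi, h]; rfl
  | succ k ih =>
    rw [← Nat.add_assoc, connSum, ih, if_neg (by omega), show n + k + 1 - n = k + 1 by omega]
    rfl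

lemma connSum_reverse (hd : d * d = 1) {n k : ℕ} (hk : k ≤ n) :
    connSum d (fun i => if i = 0 then connSum d f n else (-d) • f (n + 1 - i)) k =
      connSum d f (n - k) := by
  induction k with
  | zero => rfl
  | succ k ih =>
    obtain ⟨m, hm⟩ : ∃ m, n - k = m + 1 := ⟨n - k - 1, by omega⟩
    rw [connSum, ih (by omega), if_neg k.succ_ne_zero, show n + 1 - (k + 1) = m + 1 by omega,
      show n - (k + 1) = m by omega, hm, connSum]
    match_scalars
    · linear_combination hd
    · ring

end connSum

section Connected

variable (J : DeltaJordanLie K L) (H : Submodule K L) {α β γ : Module.Dual K H}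

lemma connected_refl (hα : α ∈ J.roots H) : Connected J H α α :=
  ⟨0, fun _ => α, fun _ _ => hα, rfl, fun _ hk => absurd hk (Nat.not_lt_zero _), Or.inl rfl⟩

variable {J H}

lemma Connected.symm (hsym : J.SymmetricRoots H) (hβ : β ∈ J.roots H)
    (h : Connected J H α β) : Connected J H β α := by
  obtain ⟨n, f, hf, rfl, hmid, hfin⟩ := h
  obtain ⟨ε, hε, hsum⟩ := (eq_or_eq_neg_iff_exists_smul K).mp hfin
  set d := J.delta
  have hnegd : (-d) * (-d) = 1 := by rw [neg_mul_neg]; exact J.delta_mul_self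
  set r : ℕ → Module.Dual K H := fun i => if i = 0 then connSum d f n else (-d) • f (n + 1 - i)
  have hr : ∀ k ≤ n, connSum d (fun i => ε • r i) k = ε • connSum d f (n - k) := fun k hk => by
    rw [connSum_smul, connSum_reverse d f J.delta_mul_self hk]
  have hstart : ε • r 0 = β := by
    simp only [r, if_pos, hsum, smul_smul, hε, one_smul]
  have hterms : ∀ i, ε • r i ∈ J.roots H := by
    rintro (_ | i)
    · exact hstart ▸ hβ
    · exact hsym.smul_mem hε (hsym.smul_mem hnegd (hf _ (by omega)))
  refine ⟨n, fun i => ε • r i, fun i _ => hterms i, hstart, fun k hk => ?_, ?_⟩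
  · rcases k with _ | k
    · exact hterms 0
    · rw [hr _ hk.le]
      exact hsym.smul_mem hε (hmid _ (by omega))
  · rw [hr n le_rfl, Nat.sub_self]
    exact (eq_or_eq_neg_iff_exists_smul K).mpr ⟨ε, hε, rfl⟩

lemma Connected.trans (hsym : J.SymmetricRoots H) (h₁ : Connected J H α β)
    (h₂ : Connected J H β γ) : Connected J H α γ := by
  obtain ⟨n, f, hf, rfl, hfmid, hffin⟩ := h₁
  obtain ⟨m, g, hg, rfl, hgmid, hgfin⟩ := h₂
  obtain ⟨ε, hε, hfsum⟩ := (eq_or_eq_neg_iff_exists_smul K).mp hffin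
  obtain ⟨ε', hε', hgsum⟩ := (eq_or_eq_neg_iff_exists_smul K).mp hgfin
  set d := J.delta
  set h : ℕ → Module.Dual K H := fun i => if i ≤ n then f i else ε • g (i - n)
  have hlow : ∀ k ≤ n, connSum d h k = connSum d f k := fun k hk =>
    connSum_congr d h f fun i hi => if_pos (hi.trans hk)
  have hhigh : ∀ k, connSum d h (n + k) = ε • connSum d g k := fun k => by
    rw [← connSum_smul]
    exact connSum_append d f (fun i => ε • g i) hfsum k
  refine ⟨n + m, h, fun i hi => ?_, if_pos n.zero_le, fun k hk => ?_, ?_⟩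
  · by_cases hin : i ≤ n
    · simp only [h, if_pos hin]; exact hf i hin
    · simp only [h, if_neg hin]; exact hsym.smul_mem hε (hg _ (by omega))
  · by_cases hkn : k < n
    · rw [hlow k hkn.le]; exact hfmid k hkn
    · rw [show k = n + (k - n) by omega, hhigh]
      exact hsym.smul_mem hε (hgmid _ (by omega))
  · rw [hhigh, hgsum, smul_smul]
    refine (eq_or_eq_neg_iff_exists_smul K).mpr ⟨ε * ε', ?_, rfl⟩
    linear_combination ε' * ε' * hε + hε'

end Connected

theorem stmt3_general (J : DeltaJordanLie K L) (H : Submodule K L)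
    (hsym : J.SymmetricRoots H) :
    Equivalence (fun a b : {γ : Module.Dual K H // γ ∈ J.roots H} =>
      Connected J H a.1 b.1) :=
  ⟨fun a => connected_refl J H a.2, fun {_ b} h => h.symm hsym b.2, fun h₁ h₂ => h₁.trans hsym h₂⟩

/-- the connection relation is an equivalence relation on `Λ`. -/
theorem stmt3 (J : DeltaJordanLie K L) (H : Submodule K L) (hs : J.IsSplitting H)
    (hsym : J.SymmetricRoots H) :
    Equivalence (fun a b : {γ : Module.Dual K H // γ ∈ J.roots H} =>
      Connected J H a.1 b.1) :=
  stmt3_general J H hsym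
end

section
/- Let L be a split δ Jordan-Lie algebra with symmetric root system Λ, α ∈ Λ, and γ ∈ Λ with γ ∉ Λ_α. Then [L_β, L_γ] = 0 for every β ∈ Λ_α. -/
variable {K L : Type*} [Field K] [AddCommGroup L] [Module K L]

/-! By the Jacobi identity `[L_β, L_γ] ⊆ L_{δ(β+γ)}`, so a nonzero bracket forces `γ = -β` or
`δ(β+γ) ∈ Λ`. In both cases `γ` is connected to `α`: in the second one a connection from `α`
to `±β` is extended by two more roots so that its final sum becomes `±γ`. -/

def snocAt {M : Type*} (f : ℕ → M) (n : ℕ) (a : M) : ℕ → M := fun i => if i ≤ n then f i else a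

namespace DeltaJordanLie

variable (J : DeltaJordanLie K L) {H : Submodule K L}

lemma delta_mul_self_s5 : J.delta * J.delta = 1 := by
  rcases J.delta_pm with h | h <;> simp [h]

lemma delta_ne_zero : J.delta ≠ 0 := by
  rcases J.delta_pm with h | h <;> simp [h]

lemma delta_smul_mem_roots (hsym : J.SymmetricRoots H) {β : Module.Dual K H}
    (hβ : β ∈ J.roots H) : J.delta • β ∈ J.roots H := by
  rcases J.delta_pm with h | h
  · simpa [h] using hβ
  · rw [h, neg_one_smul K β]
    exact hsym β hβ

lemma br_mem_rootSpace {β γ : Module.Dual K H} {x y : L} (hx : x ∈ J.rootSpace H β)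
    (hy : y ∈ J.rootSpace H γ) : J.br x y ∈ J.rootSpace H (J.delta • (β + γ)) := by
  intro h
  rw [J.jacobi, hx h, hy h]
  simp only [map_smul, LinearMap.smul_apply, LinearMap.add_apply, smul_eq_mul]
  module

end DeltaJordanLie

section Connections

variable {H : Submodule K L}

lemma connSum_snocAt_of_le (d : K) (f : ℕ → Module.Dual K H) {n : ℕ} (a : Module.Dual K H) :
    ∀ k ≤ n, connSum d (snocAt f n a) k = connSum d f k
  | 0, _ => by simp [connSum, snocAt]
  | k + 1, hk => by
      rw [connSum, connSum, connSum_snocAt_of_le d f a k (by omega), snocAt, if_pos hk]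

lemma connSum_snocAt_succ (d : K) (f : ℕ → Module.Dual K H) (n : ℕ) (a : Module.Dual K H) :
    connSum d (snocAt f n a) (n + 1) = d • (connSum d f n + a) := by
  rw [connSum, connSum_snocAt_of_le d f a n le_rfl, snocAt, if_neg (by omega)]

variable {J : DeltaJordanLie K L} {α β : Module.Dual K H} {n : ℕ} {f : ℕ → Module.Dual K H}

lemma isConnection_neg_iff : IsConnection J H α (-β) n f ↔ IsConnection J H α β n f := by
  simp only [IsConnection, neg_neg, or_comm]

lemma IsConnection.extend (hf : IsConnection J H α β n f)
    (hend : connSum J.delta f n ∈ J.roots H) {a : Module.Dual K H} (ha : a ∈ J.roots H) :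
    IsConnection J H α (J.delta • (connSum J.delta f n + a)) (n + 1) (snocAt f n a) := by
  obtain ⟨hroots, hstart, hsums, -⟩ := hf
  refine ⟨fun i hi => ?_, by simpa [snocAt] using hstart, fun k hk => ?_,
    Or.inl (connSum_snocAt_succ _ f n a)⟩
  · by_cases hin : i ≤ n
    · simpa [snocAt, hin] using hroots i hin
    · simpa [snocAt, hin] using ha
  · rw [connSum_snocAt_of_le _ f a k (by omega)]
    rcases Nat.lt_or_eq_of_le (Nat.lt_succ_iff.mp hk) with hk | rfl
    · exact hsums k hk
    · exact hend

/-- Appending `γ` and then `-δβ` to a connection ending at `β` moves its end to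
`δ(δ(β + γ) - δβ) = γ`. -/
lemma IsConnection.connected_of_connSum_eq (hsym : J.SymmetricRoots H)
    (hf : IsConnection J H α β n f) (hend : connSum J.delta f n = β) (hβ : β ∈ J.roots H)
    {γ : Module.Dual K H} (hγ : γ ∈ J.roots H) (hμ : J.delta • (β + γ) ∈ J.roots H) :
    Connected J H α γ := by
  have h₁ := hf.extend (hend ▸ hβ) hγ
  have h₂ := h₁.extend (by rwa [connSum_snocAt_succ, hend])
    (hsym _ (J.delta_smul_mem_roots hsym hβ))
  have hγ' : J.delta • (J.delta • (β + γ) + -(J.delta • β)) = γ := by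
    simp only [smul_add, smul_neg, smul_smul, J.delta_mul_self_s5, one_smul]
    abel
  rw [connSum_snocAt_succ, hend, hγ'] at h₂
  exact ⟨_, _, h₂⟩

lemma IsConnection.connected_of_delta_smul_add_mem_roots (hsym : J.SymmetricRoots H)
    (hf : IsConnection J H α β n f) (hβ : β ∈ J.roots H) {γ : Module.Dual K H}
    (hγ : γ ∈ J.roots H) (hμ : J.delta • (β + γ) ∈ J.roots H) : Connected J H α γ := by
  rcases hf.2.2.2 with hend | hend
  · exact hf.connected_of_connSum_eq hsym hend hβ hγ hμ
  · have hμ' : J.delta • (-β + -γ) ∈ J.roots H := by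
      rw [← neg_add, smul_neg]
      exact hsym _ hμ
    obtain ⟨m, g, hg⟩ := (isConnection_neg_iff.mpr hf).connected_of_connSum_eq hsym hend
      (hsym β hβ) (hsym γ hγ) hμ'
    exact ⟨m, g, isConnection_neg_iff.mp hg⟩

end Connections

theorem stmt5_general (J : DeltaJordanLie K L) (H : Submodule K L)
    (hsym : J.SymmetricRoots H) (α γ : Module.Dual K H)
    (hγ : γ ∈ J.roots H) (hγn : γ ∉ connectedRoots J H α) :
    ∀ β ∈ connectedRoots J H α, ∀ x ∈ J.rootSpace H β, ∀ y ∈ J.rootSpace H γ,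
      J.br x y = 0 := by
  rintro β ⟨hβ, n, f, hf⟩ x hx y hy
  by_contra hxy
  refine hγn ⟨hγ, ?_⟩
  by_cases hβγ : β + γ = 0
  · rw [eq_neg_of_add_eq_zero_right hβγ]
    exact ⟨n, f, isConnection_neg_iff.mpr hf⟩
  · have hμ : J.delta • (β + γ) ∈ J.roots H :=
      ⟨smul_ne_zero J.delta_ne_zero hβγ,
        (Submodule.ne_bot_iff _).mpr ⟨_, J.br_mem_rootSpace hx hy, hxy⟩⟩
    exact hf.connected_of_delta_smul_add_mem_roots hsym hβ hγ hμ

/-- if `γ ∈ Λ` is not connected to `α`, then `[L_β, L_γ] = 0` for every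
`β ∈ Λ_α`. -/
theorem stmt5 (J : DeltaJordanLie K L) (H : Submodule K L) (hs : J.IsSplitting H)
    (hsym : J.SymmetricRoots H) (α γ : Module.Dual K H)
    (hα : α ∈ J.roots H) (hγ : γ ∈ J.roots H) (hγn : γ ∉ connectedRoots J H α) :
    ∀ β ∈ connectedRoots J H α, ∀ x ∈ J.rootSpace H β, ∀ y ∈ J.rootSpace H γ,
      J.br x y = 0 :=
  stmt5_general J H hsym α γ hγ hγn
end

section
/- Let L be a split δ Jordan-Lie algebra over a field of characteristic 0, I an ideal of L, and x = h₀ + Σ_{j=1}^m e_{β_j} ∈ I with h₀ ∈ H, e_{β_j} ∈ L_{β_j}, and β_j ≠ β_k for j ≠ k. Then each component e_{β_j} belongs to I. -/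
variable {K L : Type*} [Field K] [AddCommGroup L] [Module K L]

/-!
Bracketing with `z ∈ H` acts on each root component `e_β` by the scalar `β z`, and on `h₀`
by `0`. Applying `ad z - α z` to a sum of simultaneous eigenvectors kills the `α`-component and
rescales the others by `β z - α z`, which is nonzero for a suitable `z` whenever `β ≠ α`; so
induction on the number of components shows that an ideal containing the sum contains every
component.
-/

theorem Submodule.forall_mem_of_sum_mem_of_eigenvectors {K V ι κ : Type*} [Field K]
    [AddCommGroup V] [Module K V] {T : ι → Module.End K V} {p : Submodule K V}
    (hp : ∀ i, ∀ x ∈ p, T i x ∈ p) {μ : κ → ι → K} {s : Finset κ} (hμ : Set.InjOn μ s) :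
    ∀ {v : κ → V}, (∀ k i, T i (v k) = μ k i • v k) → ∑ k ∈ s, v k ∈ p → ∀ k ∈ s, v k ∈ p := by
  classical
  induction s using Finset.induction_on with
  | empty => simp
  | @insert a s has ih =>
    intro v hv hsum
    have hμs : Set.InjOn μ s := hμ.mono (by simp)
    suffices hs : ∀ k ∈ s, v k ∈ p by
      rw [Finset.sum_insert has] at hsum
      have ha : v a ∈ p := by simpa using sub_mem hsum (sum_mem hs)
      simpa [ha] using hs
    intro k hk
    have hka : μ k ≠ μ a := fun h =>
      has (hμ (by simp [hk]) (by simp) h ▸ hk)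
    obtain ⟨i, hi⟩ := Function.ne_iff.mp hka
    let w : κ → V := fun l => (μ l i - μ a i) • v l
    have hw : ∀ l j, T j (w l) = μ l j • w l := fun l j => by
      simp only [w, map_smul, hv, smul_comm (μ l j)]
    have hwsum : ∑ l ∈ s, w l = T i (∑ l ∈ insert a s, v l) - μ a i • ∑ l ∈ insert a s, v l := by
      rw [map_sum, Finset.smul_sum, ← Finset.sum_sub_distrib, Finset.sum_insert has]
      simp only [w, hv, ← sub_smul, sub_self, zero_add]
    have hwk : w k ∈ p := ih hμs hw (hwsum ▸ sub_mem (hp i _ hsum) (p.smul_mem _ hsum)) k hk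
    exact (p.smul_mem_iff (sub_ne_zero.mpr hi)).mp hwk

theorem IsIdeal.forall_mem_of_sum_mem_rootSpace {J : DeltaJordanLie K L} {H I : Submodule K L}
    (hI : IsIdeal J I) {κ : Type*} {α : κ → Module.Dual K H} {s : Finset κ}
    (hα : Set.InjOn α s) {v : κ → L} (hv : ∀ k, v k ∈ J.rootSpace H (α k))
    (hsum : ∑ k ∈ s, v k ∈ I) : ∀ k ∈ s, v k ∈ I :=
  I.forall_mem_of_sum_mem_of_eigenvectors (T := fun z : H => J.br z) (μ := fun k => ⇑(α k))
    (fun z x hx => (hI x hx z).2) (DFunLike.coe_injective.comp_injOn hα) (fun k z => hv k z) hsum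

theorem stmt12_general (J : DeltaJordanLie K L) (H : Submodule K L)
    (hs : J.IsSplitting H) (I : Submodule K L) (hI : IsIdeal J I)
    (m : ℕ) (β : Fin m → Module.Dual K H) (hβroot : ∀ j, β j ∈ J.roots H)
    (hβinj : Function.Injective β)
    (h₀ : L) (hh₀ : h₀ ∈ H) (e : Fin m → L) (he : ∀ j, e j ∈ J.rootSpace H (β j))
    (hx : h₀ + ∑ j, e j ∈ I) :
    ∀ j, e j ∈ I := by
  let α : Option (Fin m) → Module.Dual K H := fun o => o.elim 0 β
  let v : Option (Fin m) → L := fun o => o.elim h₀ e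
  have hα : Function.Injective α := by
    rintro (_ | j) (_ | k) h
    · rfl
    · exact absurd h.symm (hβroot k).1
    · exact absurd h (hβroot j).1
    · exact congrArg some (hβinj h)
  have hv : ∀ o, v o ∈ J.rootSpace H (α o) := by
    rintro (_ | j)
    · exact hs.zero_rootSpace.symm ▸ hh₀
    · exact he j
  have hsum : ∑ o, v o ∈ I := by rw [Fintype.sum_option]; exact hx
  exact fun j => hI.forall_mem_of_sum_mem_rootSpace hα.injOn hv hsum (some j) (Finset.mem_univ _)

/-- if `x = h₀ + Σ_j e_{β_j} ∈ I` with `h₀ ∈ H`, `e_{β_j} ∈ L_{β_j}` and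
the `β_j` pairwise distinct, then each `e_{β_j} ∈ I`. -/
theorem stmt12 [CharZero K] (J : DeltaJordanLie K L) (H : Submodule K L)
    (hs : J.IsSplitting H) (I : Submodule K L) (hI : IsIdeal J I)
    (m : ℕ) (β : Fin m → Module.Dual K H) (hβroot : ∀ j, β j ∈ J.roots H)
    (hβinj : Function.Injective β)
    (h₀ : L) (hh₀ : h₀ ∈ H) (e : Fin m → L) (he : ∀ j, e j ∈ J.rootSpace H (β j))
    (hx : h₀ + ∑ j, e j ∈ I) :
    ∀ j, e j ∈ I :=
  stmt12_general J H hs I hI m β hβroot hβinj h₀ hh₀ e he hx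
end
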